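/- Let c_v > 0, let ϱ₋, ϱ₊, p₋, p₊, p_M > 0 with p_M > p₋ and p_M > p₊, and set v₋ = √(2c_v)·(p_M − p₋)/√(ϱ₋(p₋ + (2c_v+1)p_M)), v₊ = −√(2c_v)·(p_M − p₊)/√(ϱ₊(p₊ + (2c_v+1)p_M)), ϱ_{M−} = ϱ₋(p₋ + (2c_v+1)p_M)/(p_M + (2c_v+1)p₋), and ϱ_{M+} = ϱ₊(p₊ + (2c_v+1)p_M)/(p_M + (2c_v+1)p₊). Then B(0) := ϱ₋ϱ₊ϱ_{M−}ϱ_{M+}(v₋ − v₊)² − (p₋ − p₊)·(ϱ₋ϱ_{M−}(ϱ_{M+} − ϱ₊) − ϱ₊ϱ_{M+}(ϱ_{M−} − ϱ₋)) > 0. -/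
import Mathlib


/-- **Lemma (positivity of `B(0)`).** For a two-shock 1D Riemann solution with
intermediate velocity `v_M = 0` and intermediate pressure `p_M > max{p₋,p₊}`,
the quantity `B(0)` is positive. -/
theorem B_zero_positive
    (cv ϱm ϱp pm pp pM vm vp ϱMm ϱMp : ℝ)
    (hcv : 0 < cv) (hϱm : 0 < ϱm) (hϱp : 0 < ϱp)
    (hpm : 0 < pm) (hpp : 0 < pp) (hpM : 0 < pM)
    (hMm : pm < pM) (hMp : pp < pM)
    (hvm : vm = Real.sqrt (2 * cv) * (pM - pm) /
      Real.sqrt (ϱm * (pm + (2 * cv + 1) * pM)))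
    (hvp : vp = -(Real.sqrt (2 * cv) * (pM - pp) /
      Real.sqrt (ϱp * (pp + (2 * cv + 1) * pM))))
    (hϱMm : ϱMm = ϱm * (pm + (2 * cv + 1) * pM) / (pM + (2 * cv + 1) * pm))
    (hϱMp : ϱMp = ϱp * (pp + (2 * cv + 1) * pM) / (pM + (2 * cv + 1) * pp)) :
    0 < ϱm * ϱp * ϱMm * ϱMp * (vm - vp) ^ 2 -
      (pm - pp) * (ϱm * ϱMm * (ϱMp - ϱp) - ϱp * ϱMp * (ϱMm - ϱm)) := by
  have hAm : (0:ℝ) < ϱm * (pm + (2 * cv + 1) * pM) := by positivity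
  have hAp : (0:ℝ) < ϱp * (pp + (2 * cv + 1) * pM) := by positivity
  have hDm : (0:ℝ) < pM + (2 * cv + 1) * pm := by positivity
  have hDp : (0:ℝ) < pM + (2 * cv + 1) * pp := by positivity
  have hvm0 : 0 ≤ vm := by
    rw [hvm]
    apply div_nonneg _ (Real.sqrt_nonneg _)
    exact mul_nonneg (Real.sqrt_nonneg _) (by linarith)
  have hvp0 : vp ≤ 0 := by
    rw [hvp, neg_nonpos]
    apply div_nonneg _ (Real.sqrt_nonneg _)
    exact mul_nonneg (Real.sqrt_nonneg _) (by linarith)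
  have hvm2 : vm ^ 2 = 2 * cv * (pM - pm) ^ 2 / (ϱm * (pm + (2 * cv + 1) * pM)) := by
    rw [hvm, div_pow, mul_pow, Real.sq_sqrt (by positivity : (0:ℝ) ≤ 2 * cv),
      Real.sq_sqrt hAm.le]
  have hvp2 : vp ^ 2 = 2 * cv * (pM - pp) ^ 2 / (ϱp * (pp + (2 * cv + 1) * pM)) := by
    rw [hvp, neg_pow, div_pow, mul_pow, Real.sq_sqrt (by positivity : (0:ℝ) ≤ 2 * cv),
      Real.sq_sqrt hAp.le]
    ring
  have h1 : ϱm * ϱMm * vm ^ 2 = (pM - pm) * (ϱMm - ϱm) := by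
    rw [hvm2, hϱMm]
    field_simp
    ring
  have h2 : ϱp * ϱMp * vp ^ 2 = (pM - pp) * (ϱMp - ϱp) := by
    rw [hvp2, hϱMp]
    field_simp
    ring
  have hdm : ϱMm - ϱm = ϱm * (2 * cv * (pM - pm)) / (pM + (2 * cv + 1) * pm) := by
    rw [hϱMm]; field_simp; ring
  have hdp : ϱMp - ϱp = ϱp * (2 * cv * (pM - pp)) / (pM + (2 * cv + 1) * pp) := by
    rw [hϱMp]; field_simp; ring
  have hm' : 0 < ϱMm - ϱm := by
    rw [hdm]
    exact div_pos (mul_pos hϱm (mul_pos (by linarith) (sub_pos.mpr hMm))) hDm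
  have hp' : 0 < ϱMp - ϱp := by
    rw [hdp]
    exact div_pos (mul_pos hϱp (mul_pos (by linarith) (sub_pos.mpr hMp))) hDp
  have hMm0 : 0 < ϱMm := by linarith
  have hMp0 : 0 < ϱMp := by linarith
  have E : ϱm * ϱp * ϱMm * ϱMp * (vm - vp) ^ 2 -
      (pm - pp) * (ϱm * ϱMm * (ϱMp - ϱp) - ϱp * ϱMp * (ϱMm - ϱm)) =
      ϱp * ϱMp * ((ϱMm - ϱm) * (pM - pp)) + ϱm * ϱMm * ((ϱMp - ϱp) * (pM - pm)) +
      2 * (ϱm * ϱp * ϱMm * ϱMp) * (vm * (-vp)) := by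
    linear_combination ϱp * ϱMp * h1 + ϱm * ϱMm * h2
  rw [E]
  have t1 : 0 < ϱp * ϱMp * ((ϱMm - ϱm) * (pM - pp)) :=
    mul_pos (mul_pos hϱp hMp0) (mul_pos hm' (sub_pos.mpr hMp))
  have t2 : 0 < ϱm * ϱMm * ((ϱMp - ϱp) * (pM - pm)) :=
    mul_pos (mul_pos hϱm hMm0) (mul_pos hp' (sub_pos.mpr hMm))
  have t3 : 0 ≤ 2 * (ϱm * ϱp * ϱMm * ϱMp) * (vm * (-vp)) := by
    apply mul_nonneg (by positivity)
    exact mul_nonneg hvm0 (neg_nonneg.mpr hvp0)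
  linarith
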